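/- For all integers m ≥ 0, n ≥ 2 and t with 1 ≤ t ≤ m + n − 2, the K_{1,t}-structure connectivity of the DCell network satisfies κ(D_{m,n}; K_{1,t}) ≤ ⌈(n−1)/(1+t)⌉ + m. -/

import Mathlib

open SimpleGraph

/-! ## Structure connectivity -/

/-- The set of vertices covered by a family of subgraphs of `G`. -/
def SimpleGraph.cutVerts {V : Type*} {G : SimpleGraph V} (F : Finset G.Subgraph) : Set V :=
  ⋃ A ∈ F, A.verts

/-- A family `F` of subgraphs of `G` is a subgraph cut if deleting all vertices of members of `F`
leaves a graph that is disconnected or has at most one vertex. -/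
def SimpleGraph.IsSubgraphCut {V : Type*} (G : SimpleGraph V) (F : Finset G.Subgraph) : Prop :=
  ¬ (G.induce (SimpleGraph.cutVerts F)ᶜ).Connected ∨ ((SimpleGraph.cutVerts F)ᶜ : Set V).Subsingleton

/-- An `H`-structure cut of `G`: a subgraph cut all of whose members are isomorphic to `H`. -/
def SimpleGraph.IsStructureCut {V W : Type*} (G : SimpleGraph V) (H : SimpleGraph W)
    (F : Finset G.Subgraph) : Prop :=
  G.IsSubgraphCut F ∧ ∀ A ∈ F, Nonempty (A.coe ≃g H)

/-- An `H`-substructure cut of `G`: a subgraph cut all of whose members are isomorphic to a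
connected subgraph of `H`. -/
def SimpleGraph.IsSubstructureCut {V W : Type*} (G : SimpleGraph V) (H : SimpleGraph W)
    (F : Finset G.Subgraph) : Prop :=
  G.IsSubgraphCut F ∧ ∀ A ∈ F, ∃ K : H.Subgraph, K.Connected ∧ Nonempty (A.coe ≃g K.coe)

/-- The `H`-structure connectivity `κ(G; H)`. -/
noncomputable def SimpleGraph.structConn {V W : Type*} (G : SimpleGraph V) (H : SimpleGraph W) : ℕ :=
  sInf {k | ∃ F : Finset G.Subgraph, G.IsStructureCut H F ∧ F.card = k}

/-- The `H`-substructure connectivity `κˢ(G; H)`. -/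
noncomputable def SimpleGraph.substructConn {V W : Type*} (G : SimpleGraph V) (H : SimpleGraph W) : ℕ :=
  sInf {k | ∃ F : Finset G.Subgraph, G.IsSubstructureCut H F ∧ F.card = k}

/-- The star `K_{1,t}` with center `0` and `t` leaves. -/
def starGraph (t : ℕ) : SimpleGraph (Fin (t + 1)) :=
  SimpleGraph.fromRel (fun i _ => i = 0)
/-! ## The DCell network -/

/-- `tcell n m` is the number of servers of the `m`-dimensional DCell with `n`-port switches. -/
def tcell (n : ℕ) : ℕ → ℕ
  | 0 => n
  | m + 1 => tcell n m * (tcell n m + 1)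

/-- Vertices (labels `x_m x_{m-1} … x_0`) of the `m`-dimensional DCell with `n`-port switches. -/
def DCellVertex (n : ℕ) : ℕ → Type
  | 0 => Fin n
  | m + 1 => Fin (tcell n m + 1) × DCellVertex n m

/-- The numerical identifier `x_0 + Σ_{j=1}^{m} x_j · t_{j-1,n}` of a vertex of `D_{m,n}`. -/
def DCellCode (n : ℕ) : (m : ℕ) → DCellVertex n m → ℕ
  | 0, x => Fin.val x
  | m + 1, x => DCellCode n m x.2 + (Fin.val x.1) * tcell n m

/-- The `m`-dimensional DCell with `n`-port switches `D_{m,n}`. -/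
def DCell (n : ℕ) : (m : ℕ) → SimpleGraph (DCellVertex n m)
  | 0 => (⊤ : SimpleGraph (Fin n))
  | m + 1 => SimpleGraph.fromRel (fun u v =>
      (u.1 = v.1 ∧ (DCell n m).Adj u.2 v.2) ∨
      ((u.1 : ℕ) < (v.1 : ℕ) ∧ (u.1 : ℕ) = DCellCode n m v.2 ∧
        (v.1 : ℕ) = DCellCode n m u.2 + 1))

/-! Every vertex `z` of `D_{m,n}` has degree `n - 1 + m`: besides the other `n - 1` vertices of
its copy of `K_n`, it has exactly one neighbour joining the two copies of `D_{j-1,n}` at each level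
`j ≤ m`. Split the `n - 1` clique neighbours into `⌈(n-1)/(1+t)⌉` blocks of at most `1 + t`
vertices and take the `m` other neighbours one at a time. As every vertex has at least `t + 1`
neighbours, each block or singleton lies in a star `K_{1,t}` centred at one of its own vertices and
avoiding `z`. Deleting these stars isolates `z`. -/

namespace SimpleGraph

variable {V : Type*} {G : SimpleGraph V}

theorem exists_star_subgraph (c : V) (L : Finset V) (hL : ↑L ⊆ G.neighborSet c) :
    ∃ A : G.Subgraph, A.verts = insert c ↑L ∧ Nonempty (A.coe ≃g _root_.starGraph L.card) := by
  let leaf : Fin L.card → V := fun i => (L.equivFin.symm i).1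
  have hleaf : ∀ i, G.Adj c (leaf i) := fun i => hL (L.equivFin.symm i).2
  let f : Copy (_root_.starGraph L.card) G :=
    { toHom :=
        { toFun := Fin.cons c leaf
          map_rel' := by
            intro a b hab
            obtain ⟨hne, h0 | h0⟩ := (fromRel_adj ..).1 hab <;> subst h0
            · cases b using Fin.cases with
              | zero => exact absurd rfl hne
              | succ i => exact hleaf i
            · cases a using Fin.cases with
              | zero => exact absurd rfl hne
              | succ i => exact (hleaf i).symm }
      injective' := Fin.cons_injective_iff.2
        ⟨fun ⟨i, hi⟩ => (hleaf i).ne hi.symm,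
          fun i j h => L.equivFin.symm.injective (Subtype.ext h)⟩ }
  refine ⟨f.toSubgraph, ?_, ⟨f.isoToSubgraph.symm⟩⟩
  ext v
  simp only [Subgraph.map_verts, RelHom.coeFn_mk, Subgraph.verts_top, Set.image_univ,
    Fin.range_cons, Set.mem_insert_iff, eq_comm, Set.mem_range, SetLike.mem_coe, f, leaf]
  refine or_congr_right ⟨?_, fun hv => ⟨L.equivFin ⟨v, hv⟩, by simp⟩⟩
  rintro ⟨y, rfl⟩
  exact (L.equivFin.symm y).2

/-- `S` is covered by at most `k` copies of `K_{1,t}` in `G`, none of which contains `z`. -/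
def StarCover (G : SimpleGraph V) (t : ℕ) (z : V) (S : Set V) (k : ℕ) : Prop :=
  ∃ F : Finset G.Subgraph, F.card ≤ k ∧ (∀ A ∈ F, Nonempty (A.coe ≃g _root_.starGraph t)) ∧
    S ⊆ cutVerts F ∧ z ∉ cutVerts F

variable {t : ℕ} {z : V}

theorem StarCover.mono {S S' : Set V} {k k' : ℕ} (h : G.StarCover t z S k) (hS : S' ⊆ S)
    (hk : k ≤ k') : G.StarCover t z S' k' := by
  obtain ⟨F, hF, hstar, hcov, hz⟩ := h
  exact ⟨F, hF.trans hk, hstar, hS.trans hcov, hz⟩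

theorem StarCover.union {S S' : Set V} {k k' : ℕ} (h : G.StarCover t z S k)
    (h' : G.StarCover t z S' k') : G.StarCover t z (S ∪ S') (k + k') := by
  classical
  obtain ⟨F, hF, hstar, hcov, hz⟩ := h
  obtain ⟨F', hF', hstar', hcov', hz'⟩ := h'
  have hverts : cutVerts (F ∪ F') = cutVerts F ∪ cutVerts F' :=
    Finset.set_biUnion_union F F' _
  refine ⟨F ∪ F', (Finset.card_union_le _ _).trans (add_le_add hF hF'), ?_, ?_, ?_⟩
  · intro A hA
    exact (Finset.mem_union.1 hA).elim (hstar A) (hstar' A)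
  · rw [hverts]
    exact Set.union_subset_union hcov hcov'
  · rw [hverts]
    exact fun h => h.elim hz hz'

theorem starCover_insert {c : V} {R : Finset V} (hcz : c ≠ z) (hR : ↑R ⊆ G.neighborSet c)
    (hzR : z ∉ R) (hRt : R.card ≤ t) (hdeg : t + 1 ≤ (G.neighborSet c).ncard) :
    G.StarCover t z (insert c ↑R) 1 := by
  classical
  obtain ⟨N, hN⟩ :=
    (Set.finite_of_ncard_pos (by omega : 0 < (G.neighborSet c).ncard)).exists_finset_coe
  rw [← hN, Set.ncard_coe_finset] at hdeg
  rw [← hN] at hR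
  have hNt : t ≤ (N.erase z).card := by
    have := Finset.pred_card_le_card_erase (s := N) (a := z)
    omega
  have hRN : R ⊆ N.erase z := fun v hv => Finset.mem_erase.2 ⟨fun h => hzR (h ▸ hv), hR hv⟩
  obtain ⟨L, hRL, hLN, hLt⟩ := Finset.exists_subsuperset_card_eq hRN hRt hNt
  obtain ⟨A, hA, hiso⟩ := exists_star_subgraph c L fun v hv =>
    hN ▸ Finset.mem_coe.2 (Finset.mem_of_mem_erase (hLN hv))
  refine ⟨{A}, le_rfl, ?_, ?_, ?_⟩
  · intro B hB
    rw [Finset.mem_singleton.1 hB, ← hLt]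
    exact hiso
  · simp only [cutVerts, Finset.mem_singleton, Set.iUnion_iUnion_eq_left, hA]
    exact Set.insert_subset_insert (Finset.coe_subset.2 hRL)
  · simp only [cutVerts, Finset.mem_singleton, Set.iUnion_iUnion_eq_left, hA, Set.mem_insert_iff,
      Finset.mem_coe, not_or]
    exact ⟨hcz.symm, fun h => Finset.notMem_erase z N (hLN h)⟩

theorem starCover_of_isClique_of_card_le {Q : Finset V} (hQ : (Q : Set V).Pairwise G.Adj)
    (hzQ : z ∉ Q) (hdeg : ∀ v ∈ Q, t + 1 ≤ (G.neighborSet v).ncard) (hQt : Q.card ≤ t + 1)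
    {c : V} (hc : c ∈ Q) : G.StarCover t z Q 1 := by
  classical
  have hcz : c ≠ z := fun h => hzQ (h ▸ hc)
  refine (starCover_insert (R := Q.erase c) hcz ?_ ?_ ?_ (hdeg c hc)).mono ?_ le_rfl
  · exact fun v hv => hQ hc (Finset.mem_of_mem_erase hv) (Finset.ne_of_mem_erase hv).symm
  · exact fun h => hzQ (Finset.mem_of_mem_erase h)
  · rw [Finset.card_erase_of_mem hc]
    omega
  · rw [← Finset.coe_insert, Finset.insert_erase hc]

theorem starCover_of_isClique {Q : Finset V} (hQ : (Q : Set V).Pairwise G.Adj) (hzQ : z ∉ Q)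
    (hdeg : ∀ v ∈ Q, t + 1 ≤ (G.neighborSet v).ncard) :
    G.StarCover t z Q ((Q.card + t) / (t + 1)) := by
  classical
  induction h : Q.card using Nat.strong_induction_on generalizing Q with
  | _ q ih =>
  rcases Q.eq_empty_or_nonempty with rfl | ⟨c, hc⟩
  · exact ⟨∅, by simp, by simp, by simp, by simp [cutVerts]⟩
  by_cases hsmall : q ≤ t + 1
  · refine (starCover_of_isClique_of_card_le hQ hzQ hdeg (h ▸ hsmall) hc).mono le_rfl ?_
    rw [Nat.le_div_iff_mul_le (by omega)]
    have := Finset.card_pos.2 ⟨c, hc⟩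
    omega
  obtain ⟨P, hPQ, hP⟩ := Finset.exists_subset_card_eq (s := Q) (n := t + 1) (by omega)
  obtain ⟨p, hp⟩ := Finset.card_pos.1 (by omega : 0 < P.card)
  have hPcover : G.StarCover t z P 1 :=
    starCover_of_isClique_of_card_le (hQ.mono (Finset.coe_subset.2 hPQ)) (fun h => hzQ (hPQ h))
      (fun v hv => hdeg v (hPQ hv)) hP.le hp
  have hrest := ih _ (by rw [Finset.card_sdiff_of_subset hPQ]; omega)
    (hQ.mono (Finset.coe_subset.2 Finset.sdiff_subset)) (fun h => hzQ (Finset.sdiff_subset h))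
    (fun v hv => hdeg v (Finset.sdiff_subset hv)) rfl
  refine (hPcover.union hrest).mono ?_ ?_
  · rw [← Finset.coe_union, Finset.union_sdiff_of_subset hPQ]
  · rw [Finset.card_sdiff_of_subset hPQ, hP, h, add_comm 1,
      ← Nat.add_div_right _ (by omega : 0 < t + 1)]
    exact Nat.div_le_div_right (by omega)

theorem starCover_card {X : Finset V} (hzX : z ∉ X)
    (hdeg : ∀ v ∈ X, t + 1 ≤ (G.neighborSet v).ncard) : G.StarCover t z X X.card := by
  classical
  induction X using Finset.induction_on with
  | empty => exact ⟨∅, by simp, by simp, by simp, by simp [cutVerts]⟩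
  | insert x X hxX ih =>
    have hx : G.StarCover t z {x} 1 := by
      have hxz : x ≠ z := by rintro rfl; exact hzX (Finset.mem_insert_self _ X)
      simpa using starCover_insert (R := ∅) hxz (by simp) (by simp) (by simp)
        (hdeg x (Finset.mem_insert_self x X))
    refine (hx.union (ih (fun h => hzX (Finset.mem_insert_of_mem h))
      fun v hv => hdeg v (Finset.mem_insert_of_mem hv))).mono ?_ ?_
    · rw [Finset.coe_insert, Set.insert_eq]
    · rw [Finset.card_insert_of_notMem hxX, add_comm]

theorem isSubgraphCut_of_neighborSet_subset {F : Finset G.Subgraph} (hz : z ∉ cutVerts F)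
    (hN : G.neighborSet z ⊆ cutVerts F) : G.IsSubgraphCut F := by
  rw [IsSubgraphCut, or_iff_not_imp_right]
  intro hS hconn
  obtain ⟨w, hw, hwz⟩ := (Set.not_subsingleton_iff.1 hS).exists_ne z
  obtain ⟨p⟩ := hconn.preconnected ⟨z, hz⟩ ⟨w, hw⟩
  have hp : ¬ p.Nil := Walk.not_nil_of_ne fun h => hwz (congrArg Subtype.val h).symm
  exact p.snd.2 (hN (p.adj_snd hp))

theorem structConn_le_of_starCover {k : ℕ} (h : G.StarCover t z (G.neighborSet z) k) :
    G.structConn (_root_.starGraph t) ≤ k := by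
  obtain ⟨F, hF, hstar, hcov, hz⟩ := h
  refine (Nat.sInf_le ?_).trans hF
  exact ⟨F, ⟨isSubgraphCut_of_neighborSet_subset hz hcov, hstar⟩, rfl⟩

theorem structConn_starGraph_le {Q X : Finset V} (hQ : (Q : Set V).Pairwise G.Adj)
    (hN : G.neighborSet z = ↑Q ∪ ↑X)
    (hdeg : ∀ v ∈ G.neighborSet z, t + 1 ≤ (G.neighborSet v).ncard) :
    G.structConn (_root_.starGraph t) ≤ (Q.card + t) / (t + 1) + X.card := by
  have hzQ : z ∉ Q := fun h => G.irrefl (hN ▸ Or.inl h : z ∈ G.neighborSet z)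
  have hzX : z ∉ X := fun h => G.irrefl (hN ▸ Or.inr h : z ∈ G.neighborSet z)
  refine structConn_le_of_starCover (z := z) ?_
  rw [hN]
  exact (starCover_of_isClique hQ hzQ fun v hv => hdeg v (hN ▸ Or.inl hv)).union
    (starCover_card hzX fun v hv => hdeg v (hN ▸ Or.inr hv))

end SimpleGraph

theorem DCellVertex.nonempty {n : ℕ} (hn : 0 < n) : ∀ m, Nonempty (DCellVertex n m)
  | 0 => ⟨(⟨0, hn⟩ : Fin n)⟩
  | m + 1 =>
    have ⟨x⟩ := DCellVertex.nonempty hn m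
    ⟨((0 : Fin (tcell n m + 1)), x)⟩

namespace DCellCode

variable {n : ℕ}

theorem lt_tcell : ∀ {m : ℕ} (x : DCellVertex n m), DCellCode n m x < tcell n m
  | 0, x => (x : Fin n).isLt
  | m + 1, x => by
    have hx := lt_tcell x.2
    have ha := x.1.isLt
    change DCellCode n m x.2 + x.1 * tcell n m < tcell n m * (tcell n m + 1)
    nlinarith

theorem injective : ∀ {m : ℕ}, Function.Injective (DCellCode n m)
  | 0 => Fin.val_injective
  | m + 1 => fun x y h => by
    change DCellCode n m x.2 + x.1 * tcell n m = DCellCode n m y.2 + y.1 * tcell n m at h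
    have hx := lt_tcell x.2
    have hy := lt_tcell y.2
    have hT : 0 < tcell n m := by omega
    have h1 : (x.1 : ℕ) = y.1 := by
      have := congrArg (· / tcell n m) h
      simpa [Nat.add_mul_div_right _ _ hT, Nat.div_eq_of_lt hx, Nat.div_eq_of_lt hy] using this
    rw [h1] at h
    exact Prod.ext (Fin.ext h1) (injective (Nat.add_right_cancel h))

theorem exists_eq_of_lt_tcell : ∀ {m k : ℕ}, k < tcell n m → ∃ x, DCellCode n m x = k
  | 0, k, hk => ⟨(⟨k, hk⟩ : Fin n), rfl⟩
  | m + 1, k, hk => by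
    change k < tcell n m * (tcell n m + 1) at hk
    have hT : 0 < tcell n m := Nat.pos_of_ne_zero fun h => by simp [h] at hk
    obtain ⟨x, hx⟩ := exists_eq_of_lt_tcell (m := m) (Nat.mod_lt k hT)
    refine ⟨(⟨k / tcell n m, (Nat.div_lt_iff_lt_mul hT).2 (by linarith)⟩, x), ?_⟩
    change DCellCode n m x + k / tcell n m * tcell n m = k
    rw [hx, Nat.mod_add_div']

end DCellCode

namespace DCell

variable {n : ℕ}

/-- The edges of `D_{m+1,n}` joining the copies `D^a_{m,n}` and `D^b_{m,n}`, for `a < b`. -/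
def Link (n m : ℕ) (u v : Fin (tcell n m + 1) × DCellVertex n m) : Prop :=
  (u.1 : ℕ) < v.1 ∧ (u.1 : ℕ) = DCellCode n m v.2 ∧ (v.1 : ℕ) = DCellCode n m u.2 + 1

variable {m : ℕ}

theorem adj_succ_iff {u v : Fin (tcell n m + 1) × DCellVertex n m} :
    (DCell n (m + 1)).Adj u v ↔
      (u.1 = v.1 ∧ (DCell n m).Adj u.2 v.2) ∨ Link n m u v ∨ Link n m v u := by
  refine (fromRel_adj (V := Fin (tcell n m + 1) × DCellVertex n m) _ u v).trans ?_
  constructor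
  · rintro ⟨-, (h | h) | (h | h)⟩
    · exact Or.inl h
    · exact Or.inr (Or.inl h)
    · exact Or.inl ⟨h.1.symm, h.2.symm⟩
    · exact Or.inr (Or.inr h)
  · rintro (h | h | h)
    · exact ⟨fun e => h.2.ne (congrArg Prod.snd e), Or.inl (Or.inl h)⟩
    · exact ⟨fun e => h.1.ne (congrArg (fun w => (w.1 : ℕ)) e), Or.inl (Or.inr h)⟩
    · exact ⟨fun e => h.1.ne' (congrArg (fun w => (w.1 : ℕ)) e), Or.inr (Or.inr h)⟩

theorem existsUnique_link (u : Fin (tcell n m + 1) × DCellVertex n m) :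
    ∃! v, Link n m u v ∨ Link n m v u := by
  obtain ⟨v, hv⟩ : ∃ v, Link n m u v ∨ Link n m v u := by
    have hc := DCellCode.lt_tcell u.2
    have ha := u.1.isLt
    by_cases hac : (u.1 : ℕ) ≤ DCellCode n m u.2
    · obtain ⟨y, hy⟩ := DCellCode.exists_eq_of_lt_tcell (n := n) (m := m) (k := u.1)
        (by omega)
      exact ⟨(⟨DCellCode n m u.2 + 1, by omega⟩, y),
        Or.inl ⟨Nat.lt_succ_of_le hac, hy.symm, rfl⟩⟩
    · obtain ⟨y, hy⟩ :=
        DCellCode.exists_eq_of_lt_tcell (n := n) (m := m) (k := (u.1 : ℕ) - 1) (by omega)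
      exact ⟨(⟨DCellCode n m u.2, by omega⟩, y),
        Or.inr ⟨lt_of_not_ge hac, rfl, by simp only [hy]; omega⟩⟩
  refine ⟨v, hv, fun w hw => ?_⟩
  obtain ⟨h1, h2, h3⟩ | ⟨h1, h2, h3⟩ := hv <;> obtain ⟨h1', h2', h3'⟩ | ⟨h1', h2', h3'⟩ := hw
  · exact Prod.ext (Fin.ext (by omega)) (DCellCode.injective (by omega))
  · omega
  · omega
  · exact Prod.ext (Fin.ext (by omega)) (DCellCode.injective (by omega))

theorem neighborSet_eq : ∀ {m : ℕ} (u : DCellVertex n m), ∃ Q X : Finset (DCellVertex n m),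
    (Q : Set (DCellVertex n m)).Pairwise (DCell n m).Adj ∧ Q.card = n - 1 ∧ X.card = m ∧
      Disjoint Q X ∧ (DCell n m).neighborSet u = ↑Q ∪ ↑X
  | 0, u => by
    classical
    -- unfold `DCellVertex` so that the finset operations below live on `Fin n`, resp. a product
    change Fin n at u
    change ∃ Q X : Finset (Fin n), (Q : Set (Fin n)).Pairwise (⊤ : SimpleGraph (Fin n)).Adj ∧
      Q.card = n - 1 ∧ X.card = 0 ∧ Disjoint Q X ∧
      (⊤ : SimpleGraph (Fin n)).neighborSet u = ↑Q ∪ ↑X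
    refine ⟨Finset.univ.erase u, ∅, fun _ _ _ _ h => h, ?_, rfl,
      Finset.disjoint_empty_right _, ?_⟩
    · rw [Finset.card_erase_of_mem (Finset.mem_univ _), Finset.card_univ, Fintype.card_fin]
    · ext v
      simp [eq_comm]
  | m + 1, u => by
    classical
    change Fin (tcell n m + 1) × DCellVertex n m at u
    change ∃ Q X : Finset (Fin (tcell n m + 1) × DCellVertex n m),
      (Q : Set (Fin (tcell n m + 1) × DCellVertex n m)).Pairwise (DCell n (m + 1)).Adj ∧
      Q.card = n - 1 ∧ X.card = m + 1 ∧ Disjoint Q X ∧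
      (DCell n (m + 1)).neighborSet u =
        (↑Q ∪ ↑X : Set (Fin (tcell n m + 1) × DCellVertex n m))
    obtain ⟨Q, X, hQ, hQcard, hXcard, hQX, hN⟩ := neighborSet_eq u.2
    obtain ⟨w, hw, hwu⟩ := existsUnique_link u
    have hlink : ∀ v, Link n m u v ∨ Link n m v u ↔ v = w :=
      fun v => ⟨hwu v, fun h => h ▸ hw⟩
    have hwa : w.1 ≠ u.1 := by
      rcases hw with h | h
      · exact fun e => h.1.ne (congrArg Fin.val e.symm)
      · exact fun e => h.1.ne (congrArg Fin.val e)
    let lift := Function.Embedding.sectR u.1 (DCellVertex n m)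
    have hwlift : ∀ Y : Finset (DCellVertex n m), w ∉ Y.map lift := fun Y h => by
      obtain ⟨y, -, rfl⟩ := Finset.mem_map.1 h
      exact hwa rfl
    refine ⟨Q.map lift, insert w (X.map lift), ?_, ?_, ?_, ?_, ?_⟩
    · rw [Finset.coe_map]
      rintro _ ⟨y, hy, rfl⟩ _ ⟨y', hy', rfl⟩ hne
      exact adj_succ_iff.2 (Or.inl ⟨rfl, hQ hy hy' fun h => hne (h ▸ rfl)⟩)
    · rw [Finset.card_map, hQcard]
    · rw [Finset.card_insert_of_notMem (hwlift X), Finset.card_map, hXcard]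
    · exact Finset.disjoint_insert_right.2 ⟨hwlift Q, (Finset.disjoint_map lift).2 hQX⟩
    · ext ⟨b, y⟩
      have hy : (DCell n m).Adj u.2 y ↔ y ∈ Q ∨ y ∈ X := Set.ext_iff.1 hN y
      change (DCell n (m + 1)).Adj u (b, y) ↔
        (b, y) ∈ Q.map lift ∨ (b, y) ∈ insert w (X.map lift)
      simp only [adj_succ_iff, hlink, hy, Finset.mem_insert, Finset.mem_map, lift,
        Function.Embedding.sectR_apply, Prod.mk.injEq, exists_eq_right_right]
      tauto

theorem ncard_neighborSet (u : DCellVertex n m) :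
    ((DCell n m).neighborSet u).ncard = n - 1 + m := by
  classical
  obtain ⟨Q, X, -, hQ, hX, hQX, hN⟩ := neighborSet_eq u
  rw [hN, ← Finset.coe_union, Set.ncard_coe_finset, Finset.card_union_of_disjoint hQX, hQ, hX]

end DCell

theorem dcell_star_structConn_upper_general (m n t : ℕ) (hn : 2 ≤ n)
    (ht2 : t ≤ m + n - 2) :
    (DCell n m).structConn (_root_.starGraph t) ≤ (n - 1 + t) / (1 + t) + m := by
  obtain ⟨z⟩ := DCellVertex.nonempty (by omega : 0 < n) m
  obtain ⟨Q, X, hQ, hQcard, hXcard, -, hN⟩ := DCell.neighborSet_eq z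
  have hdeg : ∀ v ∈ (DCell n m).neighborSet z, t + 1 ≤ ((DCell n m).neighborSet v).ncard :=
    fun v _ => by rw [DCell.ncard_neighborSet]; omega
  have h := SimpleGraph.structConn_starGraph_le hQ hN hdeg
  rw [hQcard, hXcard] at h
  rwa [Nat.add_comm 1 t]

/-- For all integers `m ≥ 0`, `n ≥ 2` and `1 ≤ t ≤ m + n - 2`,
`κ(D_{m,n}; K_{1,t}) ≤ ⌈(n-1)/(1+t)⌉ + m`. -/
theorem dcell_star_structConn_upper (m n t : ℕ) (hn : 2 ≤ n) (ht1 : 1 ≤ t)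
    (ht2 : t ≤ m + n - 2) :
    (DCell n m).structConn (_root_.starGraph t) ≤ (n - 1 + t) / (1 + t) + m :=
  dcell_star_structConn_upper_general m n t hn ht2
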